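/- Let U ⊆ ℝ² be open and let u : U → ℂ be twice continuously differentiable. For λ ∈ ℂ∖{0} define A_λ, B_λ : U → M₂(ℂ) by A_λ = (1/4)·[[i·u_y, −e^{u/2} − λ⁻¹·e^{−u/2}], [e^{u/2} + λ·e^{−u/2}, −i·u_y]] and B_λ = (i/4)·[[−u_x, e^{u/2} − λ⁻¹·e^{−u/2}], [e^{u/2} − λ·e^{−u/2}, u_x]], where u_x, u_y denote the partial derivatives of u with respect to the two real coordinates. Then for every point p ∈ U and every λ ∈ ℂ∖{0}, the zero-curvature (Maurer–Cartan, integrability) equation ∂_y A_λ(p) − ∂_x B_λ(p) = A_λ(p)·B_λ(p) − B_λ(p)·A_λ(p) holds if and only if u satisfies the sinh-Gordon equation u_xx(p) + u_yy(p) + sinh(u(p)) = 0 at p. -/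

import Mathlib

/-! Entrywise, `∂_y A_λ - ∂_x B_λ - [A_λ, B_λ]` equals `(i/4)(u_xx + u_yy + sinh u) · diag(1, -1)`.
The off-diagonal entries cancel identically, and on the diagonal the spectral parameter drops
out of `[A_λ, B_λ]` through `λ⁻¹ λ = 1`, leaving `e^u - e^{-u} = 2 sinh u`. -/

open Complex

noncomputable section

/-- Partial derivative of `u` with respect to the first real coordinate. -/
noncomputable def px (u : ℝ × ℝ → ℂ) (p : ℝ × ℝ) : ℂ := deriv (fun t => u (t, p.2)) p.1

/-- Partial derivative of `u` with respect to the second real coordinate. -/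
noncomputable def py (u : ℝ × ℝ → ℂ) (p : ℝ × ℝ) : ℂ := deriv (fun t => u (p.1, t)) p.2

/-- The matrix `A_λ` (the `dx`-part of the connection form `α_λ`). -/
noncomputable def Aconn (u : ℝ × ℝ → ℂ) (lam : ℂ) (p : ℝ × ℝ) : Matrix (Fin 2) (Fin 2) ℂ :=
  (1 / 4 : ℂ) •
    !![Complex.I * py u p, -Complex.exp (u p / 2) - lam⁻¹ * Complex.exp (-u p / 2);
       Complex.exp (u p / 2) + lam * Complex.exp (-u p / 2), -(Complex.I * py u p)]

/-- The matrix `B_λ` (the `dy`-part of the connection form `α_λ`). -/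
noncomputable def Bconn (u : ℝ × ℝ → ℂ) (lam : ℂ) (p : ℝ × ℝ) : Matrix (Fin 2) (Fin 2) ℂ :=
  (Complex.I / 4) •
    !![-(px u p), Complex.exp (u p / 2) - lam⁻¹ * Complex.exp (-u p / 2);
       Complex.exp (u p / 2) - lam * Complex.exp (-u p / 2), px u p]

section PartialDerivatives

variable {u : ℝ × ℝ → ℂ} {p : ℝ × ℝ}

theorem DifferentiableAt.hasDerivAt_px (hu : DifferentiableAt ℝ u p) :
    HasDerivAt (fun t => u (t, p.2)) (px u p) p.1 :=
  (hu.comp p.1 (differentiableAt_id.prodMk (differentiableAt_const _))).hasDerivAt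

theorem DifferentiableAt.hasDerivAt_py (hu : DifferentiableAt ℝ u p) :
    HasDerivAt (fun t => u (p.1, t)) (py u p) p.2 :=
  (hu.comp p.2 ((differentiableAt_const _).prodMk differentiableAt_id)).hasDerivAt

end PartialDerivatives

theorem Complex.sinh_eq_sq_exp_half (z : ℂ) :
    sinh z = (exp (z / 2) ^ 2 - exp (-z / 2) ^ 2) / 2 := by
  rw [sinh, ← exp_nat_mul, ← exp_nat_mul]
  push_cast
  ring_nf

section Connection

variable {u : ℝ × ℝ → ℂ} {lam : ℂ} {p : ℝ × ℝ}

theorem deriv_Aconn_apply (hu : DifferentiableAt ℝ u p) (i j : Fin 2) :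
    deriv (fun t => Aconn u lam (p.1, t) i j) p.2 =
      (1 / 4 : ℂ) * !![I * py (py u) p,
        (-exp (u p / 2) + lam⁻¹ * exp (-u p / 2)) * (py u p / 2);
        (exp (u p / 2) - lam * exp (-u p / 2)) * (py u p / 2), -(I * py (py u) p)] i j := by
  have hE : HasDerivAt (fun t => exp (u (p.1, t) / 2)) (exp (u p / 2) * (py u p / 2)) p.2 :=
    (hu.hasDerivAt_py.div_const 2).cexp
  have hF : HasDerivAt (fun t => exp (-u (p.1, t) / 2)) (exp (-u p / 2) * (-py u p / 2)) p.2 :=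
    (hu.hasDerivAt_py.neg.div_const 2).cexp
  fin_cases i <;> fin_cases j <;>
    simp only [Aconn, Fin.zero_eta, Fin.mk_one, Fin.isValue, Matrix.of_apply, Matrix.cons_val',
      Matrix.cons_val_zero, Matrix.cons_val_one, Matrix.cons_val_fin_one, Matrix.smul_apply,
      smul_eq_mul]
  · rw [deriv_const_mul_field', deriv_const_mul_field']; rfl
  · exact ((hE.fun_neg.fun_sub (hF.const_mul _)).const_mul _).deriv.trans (by ring)
  · exact ((hE.fun_add (hF.const_mul _)).const_mul _).deriv.trans (by ring)
  · rw [deriv_const_mul_field', deriv.fun_neg', deriv_const_mul_field']; rfl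

theorem deriv_Bconn_apply (hu : DifferentiableAt ℝ u p) (i j : Fin 2) :
    deriv (fun t => Bconn u lam (t, p.2) i j) p.1 =
      (I / 4) * !![-px (px u) p,
        (exp (u p / 2) + lam⁻¹ * exp (-u p / 2)) * (px u p / 2);
        (exp (u p / 2) + lam * exp (-u p / 2)) * (px u p / 2), px (px u) p] i j := by
  have hE : HasDerivAt (fun t => exp (u (t, p.2) / 2)) (exp (u p / 2) * (px u p / 2)) p.1 :=
    (hu.hasDerivAt_px.div_const 2).cexp
  have hF : HasDerivAt (fun t => exp (-u (t, p.2) / 2)) (exp (-u p / 2) * (-px u p / 2)) p.1 :=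
    (hu.hasDerivAt_px.neg.div_const 2).cexp
  fin_cases i <;> fin_cases j <;>
    simp only [Bconn, Fin.zero_eta, Fin.mk_one, Fin.isValue, Matrix.of_apply, Matrix.cons_val',
      Matrix.cons_val_zero, Matrix.cons_val_one, Matrix.cons_val_fin_one, Matrix.smul_apply,
      smul_eq_mul]
  · rw [deriv_const_mul_field', deriv.fun_neg']; rfl
  · exact ((hE.fun_sub (hF.const_mul _)).const_mul _).deriv.trans (by ring)
  · exact ((hE.fun_sub (hF.const_mul _)).const_mul _).deriv.trans (by ring)
  · rw [deriv_const_mul_field']; rfl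

theorem lie_Aconn_Bconn (hlam : lam ≠ 0) :
    Aconn u lam p * Bconn u lam p - Bconn u lam p * Aconn u lam p =
      !![-(I / 4) * sinh (u p),
        -(py u p / 8) * (exp (u p / 2) - lam⁻¹ * exp (-u p / 2))
          - I * px u p / 8 * (exp (u p / 2) + lam⁻¹ * exp (-u p / 2));
        py u p / 8 * (exp (u p / 2) - lam * exp (-u p / 2))
          - I * px u p / 8 * (exp (u p / 2) + lam * exp (-u p / 2)),
        (I / 4) * sinh (u p)] := by
  have hlam' : lam⁻¹ * lam = 1 := inv_mul_cancel₀ hlam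
  ext i j
  fin_cases i <;> fin_cases j <;>
    simp only [Aconn, Bconn, Matrix.sub_apply, Matrix.mul_apply, Fin.sum_univ_two,
      sinh_eq_sq_exp_half, Fin.zero_eta, Fin.mk_one, Fin.isValue, Matrix.of_apply, Matrix.cons_val',
      Matrix.cons_val_zero, Matrix.cons_val_one, Matrix.cons_val_fin_one, Matrix.smul_apply,
      smul_eq_mul]
  · linear_combination (I / 8 * exp (-u p / 2) ^ 2) * hlam'
  · linear_combination (py u p / 8 * (exp (u p / 2) - lam⁻¹ * exp (-u p / 2))) * I_mul_I
  · linear_combination (-(py u p / 8) * (exp (u p / 2) - lam * exp (-u p / 2))) * I_mul_I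
  · linear_combination (-(I / 8) * exp (-u p / 2) ^ 2) * hlam'

def curvature (u : ℝ × ℝ → ℂ) (lam : ℂ) (p : ℝ × ℝ) : Matrix (Fin 2) (Fin 2) ℂ :=
  Matrix.of fun i j => deriv (fun t => Aconn u lam (p.1, t) i j) p.2
    - deriv (fun t => Bconn u lam (t, p.2) i j) p.1
    - (Aconn u lam p * Bconn u lam p - Bconn u lam p * Aconn u lam p) i j

theorem curvature_eq (hu : DifferentiableAt ℝ u p) (hlam : lam ≠ 0) :
    curvature u lam p = (I / 4 * (px (px u) p + py (py u) p + sinh (u p))) • !![1, 0; 0, -1] := by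
  ext i j
  rw [curvature, Matrix.of_apply, deriv_Aconn_apply hu, deriv_Bconn_apply hu, lie_Aconn_Bconn hlam]
  fin_cases i <;> fin_cases j <;>
    simp only [Fin.zero_eta, Fin.mk_one, Fin.isValue, Matrix.of_apply, Matrix.cons_val',
      Matrix.cons_val_zero, Matrix.cons_val_one, Matrix.cons_val_fin_one, Matrix.smul_apply,
      smul_eq_mul] <;> ring

end Connection

/-- For a twice continuously differentiable `u` on an open set `U ⊆ ℝ²`,
the zero-curvature (Maurer–Cartan) equation `∂_y A_λ − ∂_x B_λ = A_λ·B_λ − B_λ·A_λ` holds at a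
point `p ∈ U` for `λ ≠ 0` if and only if `u` satisfies the sinh-Gordon equation
`u_xx + u_yy + sinh u = 0` at `p`. -/
theorem zero_curvature_iff_sinhGordon
    (U : Set (ℝ × ℝ)) (hU : IsOpen U) (u : ℝ × ℝ → ℂ) (hu : ContDiffOn ℝ 2 u U) :
    ∀ p ∈ U, ∀ lam : ℂ, lam ≠ 0 →
      ((∀ i j : Fin 2,
          deriv (fun t => Aconn u lam (p.1, t) i j) p.2
              - deriv (fun t => Bconn u lam (t, p.2) i j) p.1
            = (Aconn u lam p * Bconn u lam p - Bconn u lam p * Aconn u lam p) i j)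
        ↔ px (px u) p + py (py u) p + Complex.sinh (u p) = 0) := by
  intro p hp lam hlam
  have hu_p : DifferentiableAt ℝ u p :=
    (hu.differentiableOn (by norm_num)).differentiableAt (hU.mem_nhds hp)
  calc _ ↔ curvature u lam p = 0 := by simp [← Matrix.ext_iff, curvature, sub_eq_zero]
    _ ↔ _ := by simp [curvature_eq hu_p hlam, ← Matrix.ext_iff, I_ne_zero]

end
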